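/- arXiv:2108.04734 — 2 statements merged into one kernel-verified Lean document; each statement's English description precedes it below -/
import Mathlib

section
/- Let n ≥ 1, h = 1/(16√n), and suppose A has full row rank, (x, s) ∈ P° × D°, t > 0, and ‖xs − t·1‖₂ ≤ t/4. Let t' satisfy t/(1+h) ≤ t' ≤ t, set μ = xs, δ_μ = t'·1 − μ, and let δ_x = X(I − P_proj)(δ_μ/μ), δ_s = S P_proj(δ_μ/μ). Then x' = x + δ_x and s' = s + δ_s satisfy (x', s') ∈ P° × D° and ‖x's' − t'·1‖₂ ≤ t'/6. -/
/-!
Since `A X P = A X` and `S P = Aᵀ (A S⁻¹ X Aᵀ)⁻¹ A X`, the step `δx` lies in `ker A` and `δs` in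
`range Aᵀ`, so `δx ⬝ δs = 0`, and the linearised centrality equation `s δx + x δs = δμ` holds
exactly. Hence the new residual `x' s' - t'` is just `δx δs`. Scaling by `(X S⁻¹)^{1/2}` turns the
two orthogonal directions into vectors summing to `δμ / √μ`, which bounds `‖δx δs‖₂` by
`½ ∑ δμ² / μ`; with `μ ≥ 3t/4` and `‖δμ‖₂ ≤ t/4 + (t - t')√n ≤ 5t/16` this is at most
`25t/384 ≤ t'/6`. Positivity follows because `(x + δx)(s + δs) = t' + δx δs > 0` componentwise,
while both factors negative would force `s δx + x δs < -2μ`.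
-/

open Matrix

/-- The projection-like matrix `P = S⁻¹Aᵀ(A S⁻¹ X Aᵀ)⁻¹ A X`. -/
noncomputable def Pproj {d n : ℕ} (A : Matrix (Fin d) (Fin n) ℝ) (x s : Fin n → ℝ) :
    Matrix (Fin n) (Fin n) ℝ :=
  (Matrix.diagonal s)⁻¹ * Aᵀ * (A * (Matrix.diagonal s)⁻¹ * Matrix.diagonal x * Aᵀ)⁻¹ *
    A * Matrix.diagonal x

/-- The ℓ2 norm. -/
noncomputable def l2 {n : ℕ} (u : Fin n → ℝ) : ℝ := Real.sqrt (∑ i, (u i) ^ 2)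

namespace Matrix

variable {m n K : Type*} [Fintype m] [Fintype n] [Field K]

lemma inv_diagonal_of_ne_zero [DecidableEq n] {v : n → K} (hv : ∀ i, v i ≠ 0) :
    (diagonal v)⁻¹ = diagonal v⁻¹ :=
  inv_eq_left_inv <| by
    rw [diagonal_mul_diagonal, ← diagonal_one]
    exact congrArg diagonal (funext fun i => inv_mul_cancel₀ (hv i))

lemma injective_vecMul_of_rank_eq_card {A : Matrix m n K} (hA : A.rank = Fintype.card m) :
    Function.Injective A.vecMul := by
  rw [vecMul_injective_iff, linearIndependent_iff_card_eq_finrank_span, ← hA,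
    rank_eq_finrank_span_row]
  rfl

lemma isUnit_mul_diagonal_mul_transpose [DecidableEq m] [DecidableEq n] {A : Matrix m n ℝ}
    (hA : A.rank = Fintype.card m) {g : n → ℝ} (hg : ∀ i, 0 < g i) :
    IsUnit (A * diagonal g * Aᵀ) := by
  have := (posDef_diagonal_iff.2 hg).mul_mul_conjTranspose_same
    (injective_vecMul_of_rank_eq_card hA)
  rw [conjTranspose_eq_transpose_of_trivial] at this
  exact this.isUnit

end Matrix

section NewtonStep

variable {d n : ℕ} (A : Matrix (Fin d) (Fin n) ℝ) {x s : Fin n → ℝ}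

lemma Pproj_eq (hs : ∀ i, s i ≠ 0) :
    Pproj A x s = diagonal s⁻¹ * Aᵀ * (A * diagonal (s⁻¹ * x) * Aᵀ)⁻¹ * A * diagonal x := by
  rw [Pproj, inv_diagonal_of_ne_zero hs, Matrix.mul_assoc A, diagonal_mul_diagonal]
  rfl

lemma mul_diagonal_mul_Pproj (hA : A.rank = d) (hx : ∀ i, 0 < x i) (hs : ∀ i, 0 < s i) :
    A * diagonal x * Pproj A x s = A * diagonal x := by
  have hM : IsUnit (A * diagonal (s⁻¹ * x) * Aᵀ) :=
    isUnit_mul_diagonal_mul_transpose (by simpa using hA)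
      fun i => mul_pos (inv_pos.2 (hs i)) (hx i)
  rw [Pproj_eq A fun i => (hs i).ne']
  calc A * diagonal x * (diagonal s⁻¹ * Aᵀ * (A * diagonal (s⁻¹ * x) * Aᵀ)⁻¹ * A * diagonal x)
      = (A * (diagonal x * diagonal s⁻¹) * Aᵀ) * (A * diagonal (s⁻¹ * x) * Aᵀ)⁻¹ *
          (A * diagonal x) := by simp only [Matrix.mul_assoc]
    _ = A * diagonal x := by
      rw [diagonal_mul_diagonal, show (fun i => x i * s⁻¹ i) = s⁻¹ * x from mul_comm x s⁻¹,
        mul_nonsing_inv _ ((isUnit_iff_isUnit_det _).1 hM), Matrix.one_mul]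

lemma diagonal_mul_Pproj (hs : ∀ i, s i ≠ 0) :
    diagonal s * Pproj A x s = Aᵀ * ((A * diagonal (s⁻¹ * x) * Aᵀ)⁻¹ * A * diagonal x) := by
  rw [Pproj_eq A hs]
  calc diagonal s * (diagonal s⁻¹ * Aᵀ * (A * diagonal (s⁻¹ * x) * Aᵀ)⁻¹ * A * diagonal x)
      = (diagonal s * diagonal s⁻¹) * (Aᵀ * ((A * diagonal (s⁻¹ * x) * Aᵀ)⁻¹ * A *
          diagonal x)) := by simp only [Matrix.mul_assoc]
    _ = _ := by
      rw [← inv_diagonal_of_ne_zero hs, mul_nonsing_inv _, Matrix.one_mul]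
      simpa [det_diagonal, Finset.prod_ne_zero_iff] using hs

variable (x s) in
noncomputable def newtonDx (w : Fin n → ℝ) : Fin n → ℝ :=
  diagonal x *ᵥ ((1 - Pproj A x s) *ᵥ w)

variable (x s) in
noncomputable def newtonDs (w : Fin n → ℝ) : Fin n → ℝ :=
  diagonal s *ᵥ (Pproj A x s *ᵥ w)

lemma newtonDx_add_newtonDs (hx : ∀ i, x i ≠ 0) (hs : ∀ i, s i ≠ 0) (r : Fin n → ℝ)
    (i : Fin n) :
    s i * newtonDx A x s (r / (x * s)) i + x i * newtonDs A x s (r / (x * s)) i = r i := by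
  have := hx i; have := hs i
  simp only [newtonDx, newtonDs, mulVec_diagonal, sub_mulVec, one_mulVec, Pi.sub_apply,
    Pi.div_apply, Pi.mul_apply]
  field_simp
  ring

lemma mulVec_newtonDx (hA : A.rank = d) (hx : ∀ i, 0 < x i) (hs : ∀ i, 0 < s i)
    (w : Fin n → ℝ) : A *ᵥ newtonDx A x s w = 0 := by
  rw [newtonDx, mulVec_mulVec, mulVec_mulVec, Matrix.mul_sub, Matrix.mul_one,
    mul_diagonal_mul_Pproj A hA hx hs, sub_self, zero_mulVec]

lemma exists_transpose_mulVec_eq_newtonDs (hs : ∀ i, s i ≠ 0) (w : Fin n → ℝ) :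
    ∃ z, Aᵀ *ᵥ z = newtonDs A x s w :=
  ⟨((A * diagonal (s⁻¹ * x) * Aᵀ)⁻¹ * A * diagonal x) *ᵥ w, by
    rw [newtonDs, mulVec_mulVec, mulVec_mulVec, diagonal_mul_Pproj A hs]⟩

lemma newtonDx_dotProduct_newtonDs (hA : A.rank = d) (hx : ∀ i, 0 < x i)
    (hs : ∀ i, 0 < s i) (w : Fin n → ℝ) : newtonDx A x s w ⬝ᵥ newtonDs A x s w = 0 := by
  obtain ⟨z, hz⟩ := exists_transpose_mulVec_eq_newtonDs A (fun i => (hs i).ne') w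
  rw [← hz, dotProduct_mulVec, vecMul_transpose, mulVec_newtonDx A hA hx hs, zero_dotProduct]

end NewtonStep

section L2

variable {n : ℕ}

lemma l2_nonneg (u : Fin n → ℝ) : 0 ≤ l2 u :=
  Real.sqrt_nonneg _

lemma l2_eq_norm (u : Fin n → ℝ) : l2 u = ‖WithLp.toLp 2 u‖ := by
  simp [l2, EuclideanSpace.norm_eq]

lemma l2_sub_le (u v : Fin n → ℝ) : l2 (u - v) ≤ l2 u + l2 v := by
  simpa only [l2_eq_norm, WithLp.toLp_sub] using norm_sub_le _ _

lemma l2_const (c : ℝ) : l2 (fun _ : Fin n => c) = |c| * √n := by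
  simp [l2, Real.sqrt_sq_eq_abs, mul_comm]

lemma sq_l2 (u : Fin n → ℝ) : l2 u ^ 2 = ∑ i, u i ^ 2 :=
  Real.sq_sqrt (Finset.sum_nonneg fun _ _ => sq_nonneg _)

lemma abs_le_l2 (u : Fin n → ℝ) (i : Fin n) : |u i| ≤ l2 u := by
  rw [← Real.sqrt_sq_eq_abs]
  exact Real.sqrt_le_sqrt (Finset.single_le_sum (f := fun j => u j ^ 2)
    (fun _ _ => sq_nonneg _) (Finset.mem_univ i))

lemma l2_le_of_sum_sq_le {u : Fin n → ℝ} {r : ℝ} (hr : 0 ≤ r) (h : ∑ i, u i ^ 2 ≤ r ^ 2) :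
    l2 u ≤ r :=
  Real.sqrt_le_iff.2 ⟨hr, h⟩

lemma sum_sq_div_le_sq_l2_div {r μ : Fin n → ℝ} {m : ℝ} (hm : 0 < m) (hμ : ∀ i, m ≤ μ i) :
    ∑ i, r i ^ 2 / μ i ≤ l2 r ^ 2 / m := by
  rw [sq_l2, Finset.sum_div]
  exact Finset.sum_le_sum fun i _ => div_le_div_of_nonneg_left (sq_nonneg _) hm (hμ i)

end L2

lemma Finset.sum_mul_le_sum_mul_sum {ι R : Type*} [CommSemiring R] [PartialOrder R]
    [IsOrderedRing R] (s : Finset ι) {f g : ι → R} (hf : ∀ i ∈ s, 0 ≤ f i)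
    (hg : ∀ i ∈ s, 0 ≤ g i) : ∑ i ∈ s, f i * g i ≤ (∑ i ∈ s, f i) * ∑ i ∈ s, g i := by
  rw [Finset.sum_mul]
  exact Finset.sum_le_sum fun i hi =>
    mul_le_mul_of_nonneg_left (Finset.single_le_sum hg hi) (hf i hi)

/-- `∑ a` and `∑ b` are the squared norms of the orthogonal vectors `√(s/x) u` and `√(x/s) v`,
whose sum is `(su + xv) / √(xs)`. -/
lemma l2_mul_le_of_dotProduct_eq_zero {n : ℕ} {x s u v : Fin n → ℝ} (hx : ∀ i, 0 < x i)
    (hs : ∀ i, 0 < s i) (huv : u ⬝ᵥ v = 0) :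
    l2 (u * v) ≤ (∑ i, (s i * u i + x i * v i) ^ 2 / (x i * s i)) / 2 := by
  set a : Fin n → ℝ := fun i => s i / x i * u i ^ 2
  set b : Fin n → ℝ := fun i => x i / s i * v i ^ 2
  have ha : ∀ i ∈ Finset.univ, 0 ≤ a i := fun i _ => by have := hx i; have := hs i; positivity
  have hb : ∀ i ∈ Finset.univ, 0 ≤ b i := fun i _ => by have := hx i; have := hs i; positivity
  have hab : ∀ i, (u i * v i) ^ 2 = a i * b i := fun i => by
    have := (hx i).ne'; have := (hs i).ne'; simp only [a, b]; field_simp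
  have hsum : ∑ i, (s i * u i + x i * v i) ^ 2 / (x i * s i) = ∑ i, a i + ∑ i, b i := by
    have hterm : ∀ i, (s i * u i + x i * v i) ^ 2 / (x i * s i) = a i + b i + 2 * (u i * v i) :=
      fun i => by have := (hx i).ne'; have := (hs i).ne'; simp only [a, b]; field_simp; ring
    simp only [hterm, Finset.sum_add_distrib, ← Finset.mul_sum]
    rw [show ∑ i, u i * v i = u ⬝ᵥ v from rfl, huv, mul_zero, add_zero]
  rw [hsum]
  refine l2_le_of_sum_sq_le (by positivity [Finset.sum_nonneg ha, Finset.sum_nonneg hb]) ?_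
  calc ∑ i, (u * v) i ^ 2 = ∑ i, a i * b i := Finset.sum_congr rfl fun i _ => hab i
    _ ≤ (∑ i, a i) * ∑ i, b i := Finset.sum_mul_le_sum_mul_sum _ ha hb
    _ ≤ ((∑ i, a i + ∑ i, b i) / 2) ^ 2 := by nlinarith [sq_nonneg (∑ i, a i - ∑ i, b i)]

lemma l2_newton_mul_le {n : ℕ} {x s u v : Fin n → ℝ} {t t' : ℝ} (ht : 0 < t)
    (hx : ∀ i, 0 < x i) (hs : ∀ i, 0 < s i) (hclose : l2 (fun i => x i * s i - t) ≤ t / 4)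
    (hstep : |t - t'| * √n ≤ t / 16) (huv : u ⬝ᵥ v = 0)
    (hnewton : ∀ i, s i * u i + x i * v i = t' - x i * s i) :
    l2 (u * v) ≤ 25 / 384 * t := by
  have hμ : ∀ i, 3 / 4 * t ≤ x i * s i := fun i => by
    linarith [(abs_le.1 ((abs_le_l2 _ i).trans hclose)).1]
  have hr : l2 (fun i => t' - x i * s i) ≤ 5 / 16 * t := by
    have hsplit : (fun i => t' - x i * s i) = (fun _ => t' - t) - fun i => x i * s i - t := by
      ext i; simp only [Pi.sub_apply]; ring
    have := l2_sub_le (fun _ : Fin n => t' - t) fun i => x i * s i - t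
    rw [← hsplit, l2_const, abs_sub_comm] at this
    linarith
  calc l2 (u * v) ≤ (∑ i, (t' - x i * s i) ^ 2 / (x i * s i)) / 2 := by
        simpa only [hnewton] using l2_mul_le_of_dotProduct_eq_zero hx hs huv
    _ ≤ l2 (fun i => t' - x i * s i) ^ 2 / (3 / 4 * t) / 2 := by
        gcongr; exact sum_sq_div_le_sq_l2_div (by positivity) hμ
    _ ≤ (5 / 16 * t) ^ 2 / (3 / 4 * t) / 2 := by
        gcongr; exact l2_nonneg _
    _ = 25 / 384 * t := by field_simp; ring

lemma sub_mul_le_and_le_of_div_one_add_le {r t t' : ℝ} (hr : 1 ≤ r)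
    (ht'1 : t / (1 + 1 / (16 * r)) ≤ t') (ht'2 : t' ≤ t) :
    (t - t') * r ≤ t / 16 ∧ 16 / 17 * t ≤ t' := by
  have hle : t ≤ t' * (1 + 1 / (16 * r)) := (div_le_iff₀ (by positivity)).1 ht'1
  have hle' : 16 * r * (t - t') ≤ t' := by
    have := mul_le_mul_of_nonneg_left hle (by positivity : (0 : ℝ) ≤ 16 * r)
    field_simp at this ⊢
    linarith
  constructor <;> nlinarith

lemma pos_and_pos_of_mul_pos {a b u v : ℝ} (ha : 0 < a) (hb : 0 < b)
    (hprod : 0 < (a + u) * (b + v)) (hlin : -(2 * (a * b)) ≤ b * u + a * v) :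
    0 < a + u ∧ 0 < b + v := by
  rcases pos_and_pos_or_neg_and_neg_of_mul_pos hprod with h | ⟨hu, hv⟩
  · exact h
  · nlinarith [mul_lt_mul_of_pos_left hu hb, mul_lt_mul_of_pos_left hv ha]

/-- One `L2Step` of the short-step interior point method: if `‖xs − t·1‖₂ ≤ t/4`
and `t/(1+h) ≤ t' ≤ t` with `h = 1/(16√n)`, then the Newton step to `t'`
stays strictly feasible and satisfies `‖x's' − t'·1‖₂ ≤ t'/6`. -/
theorem L2Step_invariant {d n : ℕ} (hn : 1 ≤ n)
    (A : Matrix (Fin d) (Fin n) ℝ) (b : Fin d → ℝ) (c : Fin n → ℝ)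
    (hA : A.rank = d)
    (x s : Fin n → ℝ) (t t' : ℝ) (ht : 0 < t)
    (hx : A.mulVec x = b ∧ ∀ i, 0 < x i)
    (hs : (∃ y : Fin d → ℝ, Aᵀ.mulVec y + s = c) ∧ ∀ i, 0 < s i)
    (hclose : l2 (fun i => x i * s i - t) ≤ t / 4)
    (ht'1 : t / (1 + 1 / (16 * Real.sqrt n)) ≤ t') (ht'2 : t' ≤ t)
    (δμ : Fin n → ℝ) (hδμ : δμ = fun i => t' - x i * s i)
    (δx δs : Fin n → ℝ)
    (hδx : δx = (Matrix.diagonal x).mulVec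
      (((1 : Matrix (Fin n) (Fin n) ℝ) - Pproj A x s).mulVec
        (fun i => δμ i / (x i * s i))))
    (hδs : δs = (Matrix.diagonal s).mulVec
      ((Pproj A x s).mulVec (fun i => δμ i / (x i * s i)))) :
    (A.mulVec (x + δx) = b ∧ ∀ i, 0 < x i + δx i) ∧
    ((∃ y : Fin d → ℝ, Aᵀ.mulVec y + (s + δs) = c) ∧ ∀ i, 0 < s i + δs i) ∧
    l2 (fun i => (x i + δx i) * (s i + δs i) - t') ≤ t' / 6 := by
  obtain ⟨hxA, hx⟩ := hx
  obtain ⟨⟨y, hy⟩, hs⟩ := hs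
  replace hδx : δx = newtonDx A x s (δμ / (x * s)) := hδx
  replace hδs : δs = newtonDs A x s (δμ / (x * s)) := hδs
  have hnewton : ∀ i, s i * δx i + x i * δs i = t' - x i * s i := fun i => by
    rw [hδx, hδs, newtonDx_add_newtonDs A (fun i => (hx i).ne') (fun i => (hs i).ne'), hδμ]
  obtain ⟨hstep, ht't⟩ := sub_mul_le_and_le_of_div_one_add_le
    (Real.one_le_sqrt.2 (by exact_mod_cast hn)) ht'1 ht'2
  have hres : (fun i => (x i + δx i) * (s i + δs i) - t') = δx * δs := by
    ext i; simp only [Pi.mul_apply]; linear_combination hnewton i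
  have hprod : l2 (δx * δs) ≤ t' / 6 := by
    have := l2_newton_mul_le ht hx hs hclose (by rwa [abs_of_nonneg (sub_nonneg.2 ht'2)])
      (hδx ▸ hδs ▸ newtonDx_dotProduct_newtonDs A hA hx hs _) hnewton
    linarith
  have hpos : ∀ i, 0 < x i + δx i ∧ 0 < s i + δs i := fun i => by
    refine pos_and_pos_of_mul_pos (hx i) (hs i) ?_ ?_
    · have := congrFun hres i
      linarith [(abs_le.1 ((abs_le_l2 (δx * δs) i).trans hprod)).1]
    · rw [hnewton i]
      linarith [mul_pos (hx i) (hs i)]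
  obtain ⟨z, hz⟩ := exists_transpose_mulVec_eq_newtonDs A (fun i => (hs i).ne') (δμ / (x * s))
  refine ⟨⟨?_, fun i => (hpos i).1⟩, ⟨⟨y - z, ?_⟩, fun i => (hpos i).2⟩, ?_⟩
  · rw [mulVec_add, hδx, mulVec_newtonDx A hA hx hs, add_zero, hxA]
  · rw [hδs, ← hz, mulVec_sub, ← hy]
    abel
  · rwa [hres]
end

section
/- Let n ≥ 1, λ = 16·log(40n), t > 0. Suppose A has full row rank, (x, s) ∈ P° × D°, and Φ((xs − t·1)/t) ≤ 16n. Let x̄, s̄ ∈ ℝ^n_{>0} satisfy ‖ln x̄ − ln x‖_∞ ≤ 1/48 and ‖ln s̄ − ln s‖_∞ ≤ 1/48, let δ̄_μ ∈ ℝ^n with ‖δ̄_μ‖₂ ≤ t/(32λ), and let (δ_x, δ_s, δ_y) solve S̄ δ_x + X̄ δ_s = δ̄_μ, A δ_x = 0, Aᵀ δ_y + δ_s = 0, where X̄ = Diag(x̄), S̄ = Diag(s̄). Then x' = x + δ_x and s' = s + δ_s are strictly positive and satisfy ‖ln x' − ln x‖₂ ≤ 1/(8λ) and ‖ln s' − ln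 s‖₂ ≤ 1/(8λ). -/
/-!
The potential bound forces `xᵢsᵢ ≥ 15t/16`; as `x̄, s̄` agree with `x, s` up to factors
`e^{±1/48}`, the weights `x̄ᵢs̄ᵢ` and `s̄ᵢxᵢ²/x̄ᵢ` are then at least `t/2`. Because `δx ⊥ δs`,
the Newton equation gives `∑ (s̄/x̄)δx² ≤ ∑ δ̄μ²/(x̄s̄)`, hence `‖δx/x‖₂ ≤ 2‖δ̄μ‖₂/t ≤ 1/(16λ)`, and
symmetrically for `δs/s`. Finally `|log(1 + u)| ≤ 2|u|` for `|u| ≤ 1/2`.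
-/

open Matrix

/-- The ℓ∞ norm. -/
noncomputable def linf {n : ℕ} (u : Fin n → ℝ) : ℝ := ⨆ i, |u i|

open Real Finset

lemma abs_le_linf {n : ℕ} (u : Fin n → ℝ) (i : Fin n) : |u i| ≤ linf u :=
  le_ciSup (f := fun j => |u j|) (Set.finite_range _).bddAbove i

lemma l2_le_iff {n : ℕ} {u : Fin n → ℝ} {ε : ℝ} (hε : 0 ≤ ε) :
    l2 u ≤ ε ↔ ∑ i, u i ^ 2 ≤ ε ^ 2 :=
  Real.sqrt_le_left hε

lemma abs_log_one_add_le_two_mul {u : ℝ} (hu : |u| ≤ 1 / 2) : |log (1 + u)| ≤ 2 * |u| := by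
  have h := abs_log_sub_add_sum_range_le (x := -u) (by rw [abs_neg]; linarith) 0
  simp only [range_zero, sum_empty, zero_add, pow_one, abs_neg, sub_neg_eq_add] at h
  calc |log (1 + u)| ≤ |u| / (1 - |u|) := h
    _ ≤ 2 * |u| := by
      rw [div_le_iff₀ (by linarith)]
      nlinarith [abs_nonneg u]

lemma abs_le_log_two_mul_of_cosh_le {u C : ℝ} (h : cosh u ≤ C) : |u| ≤ log (2 * C) := by
  have hexp : exp |u| ≤ 2 * C := by
    have := exp_abs_le u
    rw [cosh_eq] at h
    linarith
  simpa using log_le_log (exp_pos _) hexp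

-- `λ|rᵢ| ≤ log(32n) ≤ λ/16` for `rᵢ = (xᵢsᵢ - t)/t`.
lemma le_mul_of_sum_cosh_le {n : ℕ} (hn : 1 ≤ n) {t lam : ℝ} (ht : 0 < t)
    (hlam : lam = 16 * log (40 * n)) {x s : Fin n → ℝ}
    (hΦ : ∑ i, cosh (lam * ((x i * s i - t) / t)) ≤ 16 * n) (i : Fin n) :
    15 / 16 * t ≤ x i * s i := by
  have hn' : (1 : ℝ) ≤ n := by exact_mod_cast hn
  have hcosh : cosh (lam * ((x i * s i - t) / t)) ≤ 16 * n :=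
    (single_le_sum (f := fun j => cosh (lam * ((x j * s j - t) / t)))
      (fun j _ => (cosh_pos _).le) (mem_univ i)).trans hΦ
  have hL : 0 < log (40 * n) := log_pos (by linarith)
  have habs := (abs_le_log_two_mul_of_cosh_le hcosh).trans
    (log_le_log (by positivity) (by linarith : 2 * (16 * (n : ℝ)) ≤ 40 * n))
  rw [hlam, abs_mul, abs_of_pos (by positivity : (0 : ℝ) < 16 * log (40 * n))] at habs
  have hr : |(x i * s i - t) / t| ≤ 1 / 16 := by
    rw [← mul_le_mul_iff_right₀ (by positivity : (0 : ℝ) < 16 * log (40 * n))]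
    linarith
  rw [abs_le, le_div_iff₀ ht] at hr
  linarith [hr.1]

-- Both weights are `xs` times `exp` of a combination of the two log-errors, hence `≥ xs·e^{-1/24}`.
lemma half_le_newton_weights {t x s xb sb : ℝ} (hx : 0 < x) (hs : 0 < s) (hxb : 0 < xb)
    (hsb : 0 < sb) (hxc : |log xb - log x| ≤ 1 / 48) (hsc : |log sb - log s| ≤ 1 / 48)
    (hxs : 15 / 16 * t ≤ x * s) :
    t / 2 ≤ xb * sb ∧ t / 2 ≤ sb * x ^ 2 / xb := by
  have hexp : 23 / 24 ≤ exp (-(1 / 24)) := by linarith [add_one_le_exp (-(1 / 24) : ℝ)]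
  have hscaled : ∀ e, -(1 / 24) ≤ e → t / 2 ≤ x * s * exp e := fun e he => by
    have := exp_le_exp.2 he
    nlinarith [mul_pos hx hs]
  rw [abs_le] at hxc hsc
  have hw : xb * sb = x * s * exp ((log xb - log x) + (log sb - log s)) := by
    rw [exp_add, exp_sub, exp_sub, exp_log hx, exp_log hs, exp_log hxb, exp_log hsb]
    field_simp
  have hw' : sb * x ^ 2 / xb = x * s * exp ((log sb - log s) - (log xb - log x)) := by
    rw [exp_sub, exp_sub, exp_sub, exp_log hx, exp_log hs, exp_log hxb, exp_log hsb]
    field_simp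
  exact ⟨hw ▸ hscaled _ (by linarith), hw' ▸ hscaled _ (by linarith)⟩

lemma dotProduct_eq_zero_of_mulVec {R m k : Type*} [CommRing R] [Fintype m] [Fintype k]
    {A : Matrix m k R} {u w : k → R} {y : m → R} (hu : A *ᵥ u = 0) (hw : Aᵀ *ᵥ y + w = 0) :
    u ⬝ᵥ w = 0 := by
  rw [eq_neg_of_add_eq_zero_right hw, dotProduct_neg, dotProduct_mulVec, vecMul_transpose, hu,
    zero_dotProduct, neg_zero]

section NewtonStep

variable {ι : Type*} [Fintype ι] {xb sb δx δs μ : ι → ℝ}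

-- In `∑ (s̄δx + x̄δs)²/(x̄s̄)` the cross terms cancel by orthogonality.
lemma sum_div_mul_sq_le_of_orthogonal (hxb : ∀ i, 0 < xb i) (hsb : ∀ i, 0 < sb i)
    (hsys : ∀ i, sb i * δx i + xb i * δs i = μ i) (horth : ∑ i, δx i * δs i = 0) :
    ∑ i, sb i / xb i * δx i ^ 2 ≤ ∑ i, μ i ^ 2 / (xb i * sb i) := by
  have hexpand : ∀ i, μ i ^ 2 / (xb i * sb i)
      = sb i / xb i * δx i ^ 2 + 2 * (δx i * δs i) + xb i / sb i * δs i ^ 2 := by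
    intro i
    rw [← hsys i]
    field_simp [(hxb i).ne', (hsb i).ne']
    ring
  simp only [hexpand, sum_add_distrib, ← mul_sum, horth, mul_zero, add_zero]
  exact le_add_of_nonneg_right (sum_nonneg fun i _ => by have := hxb i; have := hsb i; positivity)

lemma sum_sq_div_le_of_newton_step {x : ι → ℝ} {κ : ℝ} (hκ : 0 < κ)
    (hxb : ∀ i, 0 < xb i) (hsb : ∀ i, 0 < sb i)
    (hw : ∀ i, κ ≤ xb i * sb i) (hw' : ∀ i, κ ≤ sb i * x i ^ 2 / xb i)
    (hsys : ∀ i, sb i * δx i + xb i * δs i = μ i) (horth : ∑ i, δx i * δs i = 0) :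
    ∑ i, (δx i / x i) ^ 2 ≤ (∑ i, μ i ^ 2) / κ ^ 2 := by
  have hterm : ∀ i, (δx i / x i) ^ 2 ≤ sb i / xb i * δx i ^ 2 / κ := by
    intro i
    have hx : x i ≠ 0 := by
      have := hκ.trans_le (hw' i)
      rintro h
      simp [h] at this
    have hxb := hxb i
    have hsb := hsb i
    have hidentity : (δx i / x i) ^ 2 = sb i / xb i * δx i ^ 2 / (sb i * x i ^ 2 / xb i) := by
      field_simp
    rw [hidentity]
    exact div_le_div_of_nonneg_left (by positivity) hκ (hw' i)
  calc ∑ i, (δx i / x i) ^ 2 ≤ (∑ i, sb i / xb i * δx i ^ 2) / κ := by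
        rw [sum_div]; exact sum_le_sum fun i _ => hterm i
    _ ≤ (∑ i, μ i ^ 2 / (xb i * sb i)) / κ :=
        div_le_div_of_nonneg_right
          (sum_div_mul_sq_le_of_orthogonal hxb hsb hsys horth) hκ.le
    _ ≤ (∑ i, μ i ^ 2 / κ) / κ := by
        gcongr with i; exact hw i
    _ = (∑ i, μ i ^ 2) / κ ^ 2 := by rw [← sum_div, div_div, sq]

end NewtonStep

lemma l2_log_add_sub_log_le {n : ℕ} {x δ : Fin n → ℝ} {ε : ℝ} (hx : ∀ i, 0 < x i) (hε0 : 0 ≤ ε)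
    (hε : ε ≤ 1 / 2) (hδ : ∑ i, (δ i / x i) ^ 2 ≤ ε ^ 2) :
    (∀ i, 0 < x i + δ i) ∧ l2 (fun i => log (x i + δ i) - log (x i)) ≤ 2 * ε := by
  have hsmall : ∀ i, |δ i / x i| ≤ 1 / 2 := fun i =>
    (abs_le_of_sq_le_sq ((single_le_sum (f := fun j => (δ j / x j) ^ 2)
      (fun j _ => sq_nonneg _) (mem_univ i)).trans hδ) hε0).trans hε
  have hfactor : ∀ i, x i + δ i = x i * (1 + δ i / x i) := fun i => by
    field_simp [(hx i).ne']
  have hone : ∀ i, 0 < 1 + δ i / x i := fun i => by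
    linarith [(abs_le.1 (hsmall i)).1]
  refine ⟨fun i => hfactor i ▸ mul_pos (hx i) (hone i), (l2_le_iff (by positivity)).2 ?_⟩
  have hterm : ∀ i, (log (x i + δ i) - log (x i)) ^ 2 ≤ 4 * (δ i / x i) ^ 2 := fun i => by
    rw [hfactor, log_mul (hx i).ne' (hone i).ne', add_sub_cancel_left, ← sq_abs,
      ← sq_abs (δ i / x i)]
    nlinarith [abs_log_one_add_le_two_mul (hsmall i), abs_nonneg (log (1 + δ i / x i))]
  calc ∑ i, (log (x i + δ i) - log (x i)) ^ 2 ≤ ∑ i, 4 * (δ i / x i) ^ 2 :=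
        sum_le_sum fun i _ => hterm i
    _ ≤ (2 * ε) ^ 2 := by rw [← mul_sum]; nlinarith

theorem robust_step_log_change_general {d n : ℕ} (hn : 1 ≤ n)
    (A : Matrix (Fin d) (Fin n) ℝ) (b : Fin d → ℝ) (c : Fin n → ℝ)
    (t : ℝ) (ht : 0 < t)
    (x s : Fin n → ℝ)
    (hx : A.mulVec x = b ∧ ∀ i, 0 < x i)
    (hs : (∃ y : Fin d → ℝ, Aᵀ.mulVec y + s = c) ∧ ∀ i, 0 < s i)
    (lam : ℝ) (hlam : lam = 16 * Real.log (40 * n))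
    (hΦ : ∑ i, Real.cosh (lam * ((x i * s i - t) / t)) ≤ 16 * n)
    (xb sb : Fin n → ℝ) (hxb : ∀ i, 0 < xb i) (hsb : ∀ i, 0 < sb i)
    (hxc : linf (fun i => Real.log (xb i) - Real.log (x i)) ≤ 1 / 48)
    (hsc : linf (fun i => Real.log (sb i) - Real.log (s i)) ≤ 1 / 48)
    (δμb : Fin n → ℝ) (hδμb : l2 δμb ≤ t / (32 * lam))
    (δx δs : Fin n → ℝ) (δy : Fin d → ℝ)
    (hsys : (Matrix.diagonal sb).mulVec δx + (Matrix.diagonal xb).mulVec δs = δμb ∧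
            A.mulVec δx = 0 ∧ Aᵀ.mulVec δy + δs = 0) :
    (∀ i, 0 < x i + δx i) ∧ (∀ i, 0 < s i + δs i) ∧
    l2 (fun i => Real.log (x i + δx i) - Real.log (x i)) ≤ 1 / (8 * lam) ∧
    l2 (fun i => Real.log (s i + δs i) - Real.log (s i)) ≤ 1 / (8 * lam) := by
  obtain ⟨-, hx⟩ := hx
  obtain ⟨-, hs⟩ := hs
  obtain ⟨hnewton, hAδx, hdual⟩ := hsys
  have hlam_ge : 1 / 8 ≤ lam := by
    have : log 2 ≤ log (40 * n) :=
      log_le_log two_pos (by linarith [(Nat.one_le_cast (α := ℝ)).2 hn])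
    linarith [log_two_gt_d9]
  have hxs : ∀ i, 15 / 16 * t ≤ x i * s i := le_mul_of_sum_cosh_le hn ht hlam hΦ
  have hwx : ∀ i, t / 2 ≤ xb i * sb i ∧ t / 2 ≤ sb i * x i ^ 2 / xb i := fun i =>
    half_le_newton_weights (hx i) (hs i) (hxb i) (hsb i) ((abs_le_linf _ i).trans hxc)
      ((abs_le_linf _ i).trans hsc) (hxs i)
  have hws : ∀ i, t / 2 ≤ sb i * xb i ∧ t / 2 ≤ xb i * s i ^ 2 / sb i := fun i =>
    half_le_newton_weights (hs i) (hx i) (hsb i) (hxb i) ((abs_le_linf _ i).trans hsc)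
      ((abs_le_linf _ i).trans hxc) (mul_comm (x i) (s i) ▸ hxs i)
  have hcomp : ∀ i, sb i * δx i + xb i * δs i = δμb i := fun i => by
    simpa only [Pi.add_apply, mulVec_diagonal] using congrFun hnewton i
  have horth : ∑ i, δx i * δs i = 0 := dotProduct_eq_zero_of_mulVec hAδx hdual
  have hμ : (∑ i, δμb i ^ 2) / (t / 2) ^ 2 ≤ (1 / (16 * lam)) ^ 2 := by
    rw [div_le_iff₀ (by positivity)]
    calc ∑ i, δμb i ^ 2 ≤ (t / (32 * lam)) ^ 2 := (l2_le_iff (by positivity)).1 hδμb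
      _ = (1 / (16 * lam)) ^ 2 * (t / 2) ^ 2 := by field_simp; ring
  have hε : 1 / (16 * lam) ≤ 1 / 2 := by
    rw [div_le_div_iff₀ (by positivity) two_pos]; linarith
  have hstep_x := l2_log_add_sub_log_le hx (by positivity) hε <|
    (sum_sq_div_le_of_newton_step (half_pos ht) hxb hsb (fun i => (hwx i).1)
      (fun i => (hwx i).2) hcomp horth).trans hμ
  have hstep_s := l2_log_add_sub_log_le hs (by positivity) hε <|
    (sum_sq_div_le_of_newton_step (half_pos ht) hsb hxb (fun i => (hws i).1)
      (fun i => (hws i).2) (fun i => (add_comm _ _).trans (hcomp i))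
      (by simpa only [mul_comm] using horth)).trans hμ
  have htwo : 2 * (1 / (16 * lam)) = 1 / (8 * lam) := by ring
  rw [htwo] at hstep_x hstep_s
  exact ⟨hstep_x.1, hstep_s.1, hstep_x.2, hstep_s.2⟩

/-- Change of `x` and `s` in one robust step: under the invariant
`Φ((xs − t·1)/t) ≤ 16n` with `λ = 16 log(40n)` and a step solving the barred
Newton system with `‖δ̄μ‖₂ ≤ t/(32λ)`, the new points `x' = x + δx`, `s' = s + δs`
are strictly positive and `‖ln x' − ln x‖₂ ≤ 1/(8λ)`, `‖ln s' − ln s‖₂ ≤ 1/(8λ)`. -/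
theorem robust_step_log_change {d n : ℕ} (hn : 1 ≤ n)
    (A : Matrix (Fin d) (Fin n) ℝ) (b : Fin d → ℝ) (c : Fin n → ℝ)
    (hA : A.rank = d)
    (t : ℝ) (ht : 0 < t)
    (x s : Fin n → ℝ)
    (hx : A.mulVec x = b ∧ ∀ i, 0 < x i)
    (hs : (∃ y : Fin d → ℝ, Aᵀ.mulVec y + s = c) ∧ ∀ i, 0 < s i)
    (lam : ℝ) (hlam : lam = 16 * Real.log (40 * n))
    (hΦ : ∑ i, Real.cosh (lam * ((x i * s i - t) / t)) ≤ 16 * n)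
    (xb sb : Fin n → ℝ) (hxb : ∀ i, 0 < xb i) (hsb : ∀ i, 0 < sb i)
    (hxc : linf (fun i => Real.log (xb i) - Real.log (x i)) ≤ 1 / 48)
    (hsc : linf (fun i => Real.log (sb i) - Real.log (s i)) ≤ 1 / 48)
    (δμb : Fin n → ℝ) (hδμb : l2 δμb ≤ t / (32 * lam))
    (δx δs : Fin n → ℝ) (δy : Fin d → ℝ)
    (hsys : (Matrix.diagonal sb).mulVec δx + (Matrix.diagonal xb).mulVec δs = δμb ∧
            A.mulVec δx = 0 ∧ Aᵀ.mulVec δy + δs = 0) :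
    (∀ i, 0 < x i + δx i) ∧ (∀ i, 0 < s i + δs i) ∧
    l2 (fun i => Real.log (x i + δx i) - Real.log (x i)) ≤ 1 / (8 * lam) ∧
    l2 (fun i => Real.log (s i + δs i) - Real.log (s i)) ≤ 1 / (8 * lam) :=
  robust_step_log_change_general hn A b c t ht x s hx hs lam hlam hΦ xb sb hxb hsb hxc hsc δμb hδμb
    δx δs δy hsys
end
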